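/- arXiv:1409.6264 — 2 statements merged into one kernel-verified Lean document; each statement's English description precedes it below -/
import Mathlib

section
/- Let A_k = {a_1, ..., a_k} with a_1 = 1 be a symmetric basis (a_i + a_{k-i} = a_k for 1 ≤ i ≤ k-1), and suppose every integer 0 ≤ x ≤ a_k is a sum of at most h_0 elements of A_k with repetition, where h_0 ≥ 2. Then with h = 2h_0 − 2, every integer 0 ≤ x ≤ h·a_k is a sum of at most h elements of A_k. -/
/-- `n` is a sum of at most `h` elements of the basis `a 1, …, a k`
(repetition allowed), expressed with coefficients. -/
def RepIdx (a : ℕ → ℕ) (k h n : ℕ) : Prop :=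
  ∃ c : ℕ → ℕ, (∑ i ∈ Finset.Icc 1 k, c i) ≤ h ∧
    (∑ i ∈ Finset.Icc 1 k, c i * a i) = n

/-!
Write `x = q A + r` with `A = a k` and `0 ≤ r < A`. If `r = 0`, or if `q ≤ h₀ - 2`, then `x` is
`q` copies of `A` plus a representation of `r`. Otherwise represent `A - r` with `s ≤ h₀` summands.
As `A - r < A`, none of them is `A`, so the symmetry `a i ↦ a (k - i)` turns this into a
representation of `s A - (A - r)` with the same `s` summands; adding `q + 1 - s` copies of `A`
gives `x` with `q + 1 ≤ 2 h₀ - 2` summands.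
-/

open Finset

theorem Finset.sum_Ico_one_reflect {M : Type*} [AddCommMonoid M] (f : ℕ → M) (k : ℕ) :
    ∑ i ∈ Ico 1 k, f (k - i) = ∑ i ∈ Ico 1 k, f i := by
  simpa using sum_Ico_reflect f 1 (Nat.le_succ k)

theorem Finset.sum_Icc_one_eq_sum_Ico_add {M : Type*} [AddCommMonoid M] {k : ℕ} (hk : 1 ≤ k)
    (f : ℕ → M) : ∑ i ∈ Icc 1 k, f i = ∑ i ∈ Ico 1 k, f i + f k := by
  rw [← Ico_insert_right hk, sum_insert right_notMem_Ico, add_comm]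

namespace RepIdx

variable {a : ℕ → ℕ} {k h n : ℕ}

theorem zero (a : ℕ → ℕ) (k h : ℕ) : RepIdx a k h 0 :=
  ⟨0, by simp, by simp⟩

theorem mono {h' : ℕ} (hn : RepIdx a k h n) (hh : h ≤ h') : RepIdx a k h' n :=
  let ⟨c, hc, hsum⟩ := hn
  ⟨c, hc.trans hh, hsum⟩

theorem iff_sum_Ico (hk : 1 ≤ k) :
    RepIdx a k h n ↔ ∃ (c : ℕ → ℕ) (t : ℕ),
      ∑ i ∈ Ico 1 k, c i + t ≤ h ∧ ∑ i ∈ Ico 1 k, c i * a i + t * a k = n := by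
  simp only [RepIdx, sum_Icc_one_eq_sum_Ico_add hk]
  constructor
  · rintro ⟨c, hc, hsum⟩
    exact ⟨c, c k, hc, hsum⟩
  · rintro ⟨c, t, hc, hsum⟩
    have hupd : ∀ i ∈ Ico 1 k, Function.update c k t i = c i :=
      fun i hi => Function.update_of_ne (mem_Ico.1 hi).2.ne _ _
    refine ⟨Function.update c k t, ?_, ?_⟩
    · rwa [sum_congr rfl hupd, Function.update_self]
    · rwa [sum_congr rfl fun i hi => by rw [hupd i hi], Function.update_self]

theorem add_copies_top (hk : 1 ≤ k) (hn : RepIdx a k h n) (q : ℕ) :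
    RepIdx a k (h + q) (n + q * a k) := by
  obtain ⟨c, t, hc, rfl⟩ := (iff_sum_Ico hk).1 hn
  exact (iff_sum_Ico hk).2 ⟨c, t + q, by omega, by rw [add_mul]; ring⟩

theorem exists_reflect (hk : 1 ≤ k) (hsymm : ∀ i, 1 ≤ i → i ≤ k - 1 → a i + a (k - i) = a k)
    (hn : RepIdx a k h n) (hlt : n < a k) :
    ∃ s ≤ h, n ≤ s * a k ∧ RepIdx a k s (s * a k - n) := by
  obtain ⟨c, t, hc, rfl⟩ := (iff_sum_Ico hk).1 hn
  obtain rfl : t = 0 := by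
    by_contra ht
    have := Nat.le_mul_of_pos_left (a k) (Nat.pos_of_ne_zero ht)
    omega
  simp only [zero_mul, add_zero] at hc hlt ⊢
  set s := ∑ i ∈ Ico 1 k, c i
  have hpair : ∑ i ∈ Ico 1 k, c (k - i) * a i + ∑ i ∈ Ico 1 k, c i * a i = s * a k := by
    have hrefl : ∑ i ∈ Ico 1 k, c (k - i) * a i = ∑ i ∈ Ico 1 k, c i * a (k - i) := by
      rw [← sum_Ico_one_reflect (fun i => c i * a (k - i))]
      refine sum_congr rfl fun i hi => ?_
      rw [Nat.sub_sub_self (mem_Ico.1 hi).2.le]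
    rw [hrefl, ← sum_add_distrib, sum_mul]
    refine sum_congr rfl fun i hi => ?_
    have hi := mem_Ico.1 hi
    rw [← mul_add, add_comm, hsymm i hi.1 (by omega)]
  refine ⟨s, hc, by omega, (iff_sum_Ico hk).2 ⟨fun i => c (k - i), 0, ?_, ?_⟩⟩
  · simp [s, sum_Ico_one_reflect c]
  · show ∑ i ∈ Ico 1 k, c (k - i) * a i + 0 * a k = _
    omega

end RepIdx

theorem stmt4_general (a : ℕ → ℕ) (k h₀ : ℕ) (hk : 2 ≤ k) (hh0 : 2 ≤ h₀)
    (hsymm : ∀ i, 1 ≤ i → i ≤ k - 1 → a i + a (k - i) = a k)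
    (hcov : ∀ x, x ≤ a k → RepIdx a k h₀ x) :
    ∀ x, x ≤ (2 * h₀ - 2) * a k → RepIdx a k (2 * h₀ - 2) x := by
  intro x hx
  have hk1 : 1 ≤ k := by omega
  have hqr : x / a k * a k + x % a k = x := Nat.div_add_mod' x (a k)
  have hq : x / a k ≤ 2 * h₀ - 2 := Nat.div_le_of_le_mul (by rwa [mul_comm])
  generalize x / a k = q at hqr hq
  by_cases hr : x % a k = 0
  · rw [show x = 0 + q * a k by omega]
    exact ((RepIdx.zero a k 0).add_copies_top hk1 q).mono (by omega)
  have hrA : x % a k < a k := Nat.mod_lt x <| Nat.pos_of_ne_zero fun hA => by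
    rw [hA, mul_zero, Nat.le_zero] at hx
    simp [hx] at hr
  generalize x % a k = r at hqr hr hrA
  by_cases hqs : q ≤ h₀ - 2
  · rw [← hqr, add_comm]
    exact ((hcov r hrA.le).add_copies_top hk1 q).mono (by omega)
  obtain ⟨s, hs, hsA, hrep⟩ :=
    (hcov (a k - r) (Nat.sub_le _ r)).exists_reflect hk1 hsymm (by omega)
  have hqh : q < 2 * h₀ - 2 := Nat.lt_of_mul_lt_mul_right (a := a k) (by omega)
  have hsq : s * a k ≤ (q + 1) * a k := Nat.mul_le_mul_right _ (by omega)
  rw [add_one_mul] at hsq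
  rw [show x = s * a k - (a k - r) + (q + 1 - s) * a k by rw [Nat.sub_mul, add_one_mul]; omega]
  exact (hrep.add_copies_top hk1 (q + 1 - s)).mono (by omega)

theorem stmt4 (a : ℕ → ℕ) (k h₀ : ℕ) (hk : 2 ≤ k) (hh0 : 2 ≤ h₀)
    (ha1 : a 1 = 1)
    (hmono : ∀ i j, 1 ≤ i → i < j → j ≤ k → a i < a j)
    (hsymm : ∀ i, 1 ≤ i → i ≤ k - 1 → a i + a (k - i) = a k)
    (hcov : ∀ x, x ≤ a k → RepIdx a k h₀ x) :
    ∀ x, x ≤ (2 * h₀ - 2) * a k → RepIdx a k (2 * h₀ - 2) x :=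
  stmt4_general a k h₀ hk hh0 hsymm hcov
end

section
/- The basis A_9 = {1, 3, 5, 8, 20, 23, 25, 27, 28} is a counterexample to the symmetric-basis conjecture: its smallest admissible h is h_0 = 3 (every integer 1 ≤ n ≤ 28 is a sum of at most 3 elements, but not every such integer is a sum of at most 2 elements), yet n(3, A_9) = 41 < 3·28 = 84. -/
/-- `n` is a sum of at most `h` elements of `A` (repetition allowed). -/
def CanRep (A : Finset ℕ) (h n : ℕ) : Prop :=
  ∃ l : Multiset ℕ, (∀ x ∈ l, x ∈ A) ∧ Multiset.card l ≤ h ∧ l.sum = n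

lemma canRep3_forward {A : Finset ℕ} {n : ℕ} (h : CanRep A 3 n) :
    n = 0 ∨ (∃ a ∈ A, a = n) ∨ (∃ a ∈ A, ∃ b ∈ A, a + b = n) ∨
      (∃ a ∈ A, ∃ b ∈ A, ∃ c ∈ A, a + b + c = n) := by
  obtain ⟨l, hA, hc, hs⟩ := h
  have h4 : Multiset.card l = 0 ∨ Multiset.card l = 1 ∨ Multiset.card l = 2 ∨
      Multiset.card l = 3 := by omega
  rcases h4 with h0 | h1 | h2 | h3
  · left; rw [Multiset.card_eq_zero] at h0; subst h0; simpa using hs.symm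
  · right; left
    rw [Multiset.card_eq_one] at h1; obtain ⟨a, rfl⟩ := h1
    exact ⟨a, hA a (by simp), by simpa using hs⟩
  · right; right; left
    rw [Multiset.card_eq_two] at h2; obtain ⟨a, b, rfl⟩ := h2
    exact ⟨a, hA a (by simp), b, hA b (by simp), by simpa using hs⟩
  · right; right; right
    rw [Multiset.card_eq_three] at h3; obtain ⟨a, b, c, rfl⟩ := h3
    refine ⟨a, hA a (by simp), b, hA b (by simp), c, hA c (by simp), ?_⟩
    simpa [add_assoc] using hs

lemma canRep2_forward {A : Finset ℕ} {n : ℕ} (h : CanRep A 2 n) :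
    n = 0 ∨ (∃ a ∈ A, a = n) ∨ (∃ a ∈ A, ∃ b ∈ A, a + b = n) := by
  obtain ⟨l, hA, hc, hs⟩ := h
  have h4 : Multiset.card l = 0 ∨ Multiset.card l = 1 ∨ Multiset.card l = 2 := by omega
  rcases h4 with h0 | h1 | h2
  · left; rw [Multiset.card_eq_zero] at h0; subst h0; simpa using hs.symm
  · right; left
    rw [Multiset.card_eq_one] at h1; obtain ⟨a, rfl⟩ := h1
    exact ⟨a, hA a (by simp), by simpa using hs⟩
  · right; right
    rw [Multiset.card_eq_two] at h2; obtain ⟨a, b, rfl⟩ := h2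
    exact ⟨a, hA a (by simp), b, hA b (by simp), by simpa using hs⟩

theorem stmt11 :
    (∀ n : ℕ, 1 ≤ n → n ≤ 28 →
        CanRep {1, 3, 5, 8, 20, 23, 25, 27, 28} 3 n) ∧
    (∃ n : ℕ, 1 ≤ n ∧ n ≤ 28 ∧
        ¬ CanRep {1, 3, 5, 8, 20, 23, 25, 27, 28} 2 n) ∧
    (∀ n : ℕ, 1 ≤ n → n ≤ 41 →
        CanRep {1, 3, 5, 8, 20, 23, 25, 27, 28} 3 n) ∧
    ¬ CanRep {1, 3, 5, 8, 20, 23, 25, 27, 28} 3 42 ∧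
    (41 : ℕ) < 3 * 28 := by
  have main : ∀ n : ℕ, 1 ≤ n → n ≤ 41 →
      CanRep {1, 3, 5, 8, 20, 23, 25, 27, 28} 3 n := by
    intro n h1 h2
    interval_cases n
    · exact ⟨{1}, by decide, by decide, by decide⟩
    · exact ⟨{1, 1}, by decide, by decide, by decide⟩
    · exact ⟨{3}, by decide, by decide, by decide⟩
    · exact ⟨{1, 3}, by decide, by decide, by decide⟩
    · exact ⟨{5}, by decide, by decide, by decide⟩
    · exact ⟨{1, 5}, by decide, by decide, by decide⟩
    · exact ⟨{1, 1, 5}, by decide, by decide, by decide⟩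
    · exact ⟨{8}, by decide, by decide, by decide⟩
    · exact ⟨{1, 8}, by decide, by decide, by decide⟩
    · exact ⟨{5, 5}, by decide, by decide, by decide⟩
    · exact ⟨{3, 8}, by decide, by decide, by decide⟩
    · exact ⟨{1, 3, 8}, by decide, by decide, by decide⟩
    · exact ⟨{5, 8}, by decide, by decide, by decide⟩
    · exact ⟨{1, 5, 8}, by decide, by decide, by decide⟩
    · exact ⟨{5, 5, 5}, by decide, by decide, by decide⟩
    · exact ⟨{8, 8}, by decide, by decide, by decide⟩
    · exact ⟨{1, 8, 8}, by decide, by decide, by decide⟩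
    · exact ⟨{5, 5, 8}, by decide, by decide, by decide⟩
    · exact ⟨{3, 8, 8}, by decide, by decide, by decide⟩
    · exact ⟨{20}, by decide, by decide, by decide⟩
    · exact ⟨{1, 20}, by decide, by decide, by decide⟩
    · exact ⟨{1, 1, 20}, by decide, by decide, by decide⟩
    · exact ⟨{23}, by decide, by decide, by decide⟩
    · exact ⟨{1, 23}, by decide, by decide, by decide⟩
    · exact ⟨{25}, by decide, by decide, by decide⟩
    · exact ⟨{1, 25}, by decide, by decide, by decide⟩
    · exact ⟨{27}, by decide, by decide, by decide⟩
    · exact ⟨{28}, by decide, by decide, by decide⟩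
    · exact ⟨{1, 28}, by decide, by decide, by decide⟩
    · exact ⟨{3, 27}, by decide, by decide, by decide⟩
    · exact ⟨{3, 28}, by decide, by decide, by decide⟩
    · exact ⟨{5, 27}, by decide, by decide, by decide⟩
    · exact ⟨{5, 28}, by decide, by decide, by decide⟩
    · exact ⟨{1, 5, 28}, by decide, by decide, by decide⟩
    · exact ⟨{8, 27}, by decide, by decide, by decide⟩
    · exact ⟨{8, 28}, by decide, by decide, by decide⟩
    · exact ⟨{1, 8, 28}, by decide, by decide, by decide⟩
    · exact ⟨{3, 8, 27}, by decide, by decide, by decide⟩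
    · exact ⟨{3, 8, 28}, by decide, by decide, by decide⟩
    · exact ⟨{20, 20}, by decide, by decide, by decide⟩
    · exact ⟨{1, 20, 20}, by decide, by decide, by decide⟩
  refine ⟨fun n h1 h2 => main n h1 (by omega), ⟨7, by norm_num, by norm_num, ?_⟩,
    main, ?_, by norm_num⟩
  · intro h
    have := canRep2_forward h
    revert this
    decide
  · intro h
    have := canRep3_forward h
    revert this
    decide
end
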